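/- (Lemma 4.1) Let G be a countably infinite group, ν a multiorder on G, (F_m)_{m∈ℕ} a Følner sequence in G, n ∈ ℕ and ε > 0. Then for all sufficiently large m there exists a Borel set Õ'_m ⊆ Õ with ν(Õ'_m) > 1 − ε such that for every ≺ ∈ Õ'_m both |[F_m, F_m+n]^≺| < (1+ε)·|F_m| and |[F_m−n, F_m]^≺| < (1+ε)·|F_m| hold. -/

import Mathlib

open MeasureTheory Filter
open scoped Classical symmDiff

/-- An *order of type ℤ* on `G`. -/
def IsZOrder {G : Type*} (r : G → G → Prop) : Prop :=
  IsStrictTotalOrder G r ∧ (∀ a b : G, {g : G | r a g ∧ r g b}.Finite) ∧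
    (∀ a : G, ∃ b, r b a) ∧ (∀ a : G, ∃ b, r a b)

/-- The relation on `G` encoded by an element of `{0,1}^{G×G}`. -/
def relOf {G : Type*} (x : G × G → Bool) : G → G → Prop := fun a b => x (a, b) = true

/-- The set `Õ` of orders of type ℤ on `G`, as a subset of `{0,1}^{G×G}`. -/
def ZOrders (G : Type*) : Set (G × G → Bool) := {x | IsZOrder (relOf x)}

/-- The `G`-action on `{0,1}^{G×G}` corresponding to `a (g(≺)) b ⟺ ag ≺ bg`. -/
def actB {G : Type*} [Group G] (g : G) (x : G × G → Bool) : G × G → Bool :=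
  fun p => x (p.1 * g, p.2 * g)

/-- `f : ℤ → G` is an anchored order isomorphism from `(ℤ,<)` to `(G,r)`. -/
def IsAnchoredIso {G : Type*} [One G] (r : G → G → Prop) (f : ℤ → G) : Prop :=
  Function.Bijective f ∧ f 0 = 1 ∧ ∀ i j : ℤ, i < j ↔ r (f i) (f j)

/-- The anchored bijection `bi_≺ : ℤ → G` associated with an order of type ℤ. -/
noncomputable def biOf {G : Type*} [One G] (r : G → G → Prop) : ℤ → G :=
  if h : ∃ f : ℤ → G, IsAnchoredIso r f then h.choose else fun _ => 1

/-- The index `k ∈ ℤ` of `g ∈ G` in the enumeration `bi_≺` (junk value `0` if none). -/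
noncomputable def idxOf {G : Type*} [One G] (r : G → G → Prop) (g : G) : ℤ :=
  if h : ∃ k : ℤ, biOf r k = g then h.choose else 0

/-- The order interval `[g, g+n]^≺` of length `n+1` starting at `g`. -/
noncomputable def fwdInt {G : Type*} [One G] (r : G → G → Prop) (g : G) (n : ℕ) :
    Finset G :=
  (Finset.range (n + 1)).image (fun i => biOf r (idxOf r g + i))

/-- The order interval `[g−n, g]^≺` of length `n+1` ending at `g`. -/
noncomputable def bwdInt {G : Type*} [One G] (r : G → G → Prop) (g : G) (n : ℕ) :
    Finset G :=
  (Finset.range (n + 1)).image (fun i => biOf r (idxOf r g - i))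

/-- A Følner sequence in `G`. -/
def IsFolnerSeq {G : Type*} [Group G] (F : ℕ → Finset G) : Prop :=
  (∀ n, (F n).Nonempty) ∧ ∀ g : G,
    Tendsto (fun n => ((F n ∆ (F n).image (fun h => g * h)).card : ℝ) / (F n).card)
      atTop (nhds 0)

/-!
An order `≺` of type `ℤ` is enumerated by `bi_≺`, and the interval `[g, g+n]^≺` consists of the
points `bi_≺(idx g + i)`, `0 ≤ i ≤ n`. Hence `[F, F+n]^≺` exceeds `F` by at most the number of
pairs `(g, i) ∈ F × [1, n]` with `bi_≺(idx g + i) ∉ F` (and `[F−n, F]^≺` likewise with `−i`).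
Translating `≺` by `g` turns `bi_≺(idx g + i)` into `bi_{g(≺)}(i) · g`, so by invariance of `ν`
the expected number of such `g` for fixed `i` equals `∫ #{g ∈ F : bi_≺(i) g ∉ F} dν(≺)`, which is
at most `∫ |F ∆ bi_≺(i) F| dν(≺)`. Divided by `|F_m|` this tends to `0` by the Følner property and
dominated convergence, and Markov's inequality turns the bound on the expectation into the bound
outside a set of small measure.
-/

open Finset
open scoped ENNReal

section ZOrder

variable {α : Type*} {r : α → α → Prop}

def RelCovBy (r : α → α → Prop) (u v : α) : Prop :=
  r u v ∧ ∀ w, ¬(r u w ∧ r w v)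

theorem relCovBy_iff_eq_add_one {f : ℤ → α} (hsurj : f.Surjective)
    (hf : ∀ i j, i < j ↔ r (f i) (f j)) (i j : ℤ) :
    RelCovBy r (f i) (f j) ↔ j = i + 1 := by
  constructor
  · rintro ⟨hij, hno⟩
    have := (hf i j).2 hij
    by_contra hne
    exact hno (f (i + 1)) ⟨(hf _ _).1 (by omega), (hf _ _).1 (by omega)⟩
  · rintro rfl
    refine ⟨(hf _ _).1 (by omega), fun w ⟨h₁, h₂⟩ => ?_⟩
    obtain ⟨k, rfl⟩ := hsurj w
    have := (hf _ _).2 h₁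
    have := (hf _ _).2 h₂
    omega

theorem IsAnchoredIso.unique [One α] {f f' : ℤ → α} (hf : IsAnchoredIso r f)
    (hf' : IsAnchoredIso r f') : f = f' := by
  have cov {g : ℤ → α} (hg : IsAnchoredIso r g) := relCovBy_iff_eq_add_one hg.1.2 hg.2.2
  funext i
  induction i using Int.induction_on with
  | zero => rw [hf.2.1, hf'.2.1]
  | succ i ih =>
    obtain ⟨j, hj⟩ := hf'.1.2 (f (i + 1))
    have : RelCovBy r (f' i) (f' j) := by rw [hj, ← ih]; exact (cov hf _ _).2 rfl
    rw [← hj, (cov hf' _ _).1 this]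
  | pred i ih =>
    obtain ⟨j, hj⟩ := hf'.1.2 (f (-i - 1))
    have : RelCovBy r (f' j) (f' (-i)) := by rw [hj, ← ih]; exact (cov hf _ _).2 (by ring)
    rw [← hj, (cov hf' _ _).1 this, add_sub_cancel_right]

theorem biOf_eq_of_isAnchoredIso [One α] {f : ℤ → α} (hf : IsAnchoredIso r f) :
    biOf r = f := by
  have hex : ∃ f, IsAnchoredIso r f := ⟨f, hf⟩
  rw [biOf, dif_pos hex]
  exact hex.choose_spec.unique hf

theorem IsZOrder.exists_isAnchoredIso [One α] (h : IsZOrder r) : ∃ f, IsAnchoredIso r f := by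
  obtain ⟨hsto, hfin, hmin, hmax⟩ := h
  let _ : LinearOrder α := @linearOrderOfSTO α r hsto (Classical.decRel r)
  let _ : LocallyFiniteOrder α := LocallyFiniteOrder.ofFiniteIcc fun a b =>
    ((hfin a b).insert a |>.insert b).subset fun g ⟨hag, hgb⟩ => by
      rcases hag.eq_or_lt with rfl | hag
      · exact .inr (.inl rfl)
      rcases hgb.eq_or_lt with rfl | hgb
      · exact .inl rfl
      · exact .inr (.inr ⟨hag, hgb⟩)
  have _ : NoMinOrder α := ⟨hmin⟩
  have _ : NoMaxOrder α := ⟨hmax⟩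
  let _ := LinearLocallyFiniteOrder.succOrder α
  let _ := LinearLocallyFiniteOrder.predOrder α
  let e : α ≃o ℤ := orderIsoIntOfLinearSuccPredArch (hι := ⟨1⟩)
  refine ⟨fun i => e.symm (i + e 1), ?_, by simp, fun i j => ?_⟩
  · exact e.symm.bijective.comp (Equiv.addRight (e 1)).bijective
  · exact (e.symm.lt_iff_lt.trans (add_lt_add_iff_right _)).symm

theorem IsZOrder.isAnchoredIso_biOf [One α] (h : IsZOrder r) : IsAnchoredIso r (biOf r) :=
  let ⟨_, hf⟩ := h.exists_isAnchoredIso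
  biOf_eq_of_isAnchoredIso hf ▸ hf

theorem IsZOrder.biOf_idxOf [One α] (h : IsZOrder r) (g : α) : biOf r (idxOf r g) = g := by
  have hex : ∃ k, biOf r k = g := h.isAnchoredIso_biOf.1.2 g
  rw [idxOf, dif_pos hex]
  exact hex.choose_spec

theorem IsZOrder.biOf_add_one_eq_iff [One α] (h : IsZOrder r) (i : ℤ) (v : α) :
    biOf r (i + 1) = v ↔ RelCovBy r (biOf r i) v := by
  obtain ⟨hbij, -, hlt⟩ := h.isAnchoredIso_biOf
  obtain ⟨j, rfl⟩ := hbij.2 v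
  rw [relCovBy_iff_eq_add_one hbij.2 hlt, hbij.1.eq_iff, eq_comm]

theorem IsZOrder.biOf_sub_one_eq_iff [One α] (h : IsZOrder r) (i : ℤ) (v : α) :
    biOf r (i - 1) = v ↔ RelCovBy r v (biOf r i) := by
  obtain ⟨hbij, -, hlt⟩ := h.isAnchoredIso_biOf
  obtain ⟨j, rfl⟩ := hbij.2 v
  rw [relCovBy_iff_eq_add_one hbij.2 hlt, hbij.1.eq_iff]
  omega

theorem IsZOrder.preimage {β : Type*} (h : IsZOrder r) (e : β ≃ α) : IsZOrder (e ⁻¹'o r) := by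
  obtain ⟨hsto, hfin, hmin, hmax⟩ := h
  refine ⟨(RelEmbedding.preimage e.toEmbedding r).isStrictTotalOrder,
    fun a b => (hfin (e a) (e b)).preimage e.injective.injOn, fun a => ?_, fun a => ?_⟩
  · obtain ⟨b, hb⟩ := hmin (e a)
    exact ⟨e.symm b, by simpa [Order.Preimage]⟩
  · obtain ⟨b, hb⟩ := hmax (e a)
    exact ⟨e.symm b, by simpa [Order.Preimage]⟩

theorem isZOrder_iff : IsZOrder r ↔
    ((∀ a, ¬r a a) ∧ (∀ a b c, r a b → r b c → r a c) ∧ ∀ a b, ¬r a b → ¬r b a → a = b) ∧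
      (∀ a b, ∃ s : Finset α, ∀ g, r a g ∧ r g b → g ∈ s) ∧ (∀ a, ∃ b, r b a) ∧
        ∀ a, ∃ b, r a b := by
  refine and_congr ⟨fun h => ⟨h.irrefl, h.trans, h.trichotomous⟩,
    fun ⟨h₁, h₂, h₃⟩ => { irrefl := h₁, trans := h₂, trichotomous := h₃ }⟩ (and_congr ?_ .rfl)
  refine forall₂_congr fun a b => ⟨fun h => ?_, fun ⟨s, hs⟩ => s.finite_toSet.subset hs⟩
  obtain ⟨s, hs⟩ := h.exists_finset_coe
  exact ⟨s, fun g hg => by rwa [← Finset.mem_coe, hs]⟩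

-- `fwdInt` and `bwdInt` coerce `range (n + 1)` to `Finset ℤ` through the `Finset` monad.
theorem fwdInt_eq_image [One α] (g : α) (n : ℕ) :
    fwdInt r g n = (range (n + 1)).image fun i : ℕ => biOf r (idxOf r g + i) := by
  ext
  simp [fwdInt]

theorem bwdInt_eq_image [One α] (g : α) (n : ℕ) :
    bwdInt r g n = (range (n + 1)).image fun i : ℕ => biOf r (idxOf r g - i) := by
  ext
  simp [bwdInt]

end ZOrder

theorem card_biUnion_image_range_le {α : Type*} [DecidableEq α] (F : Finset α) (s : α → ℕ → α)
    (hs : ∀ g ∈ F, s g 0 = g) (n : ℕ) :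
    #(F.biUnion fun g => (range (n + 1)).image (s g)) ≤
      #F + ∑ i ∈ Icc 1 n, #(F.filter fun g => s g i ∉ F) := by
  have hsub : F.biUnion (fun g => (range (n + 1)).image (s g)) ⊆
      F ∪ (Icc 1 n).biUnion fun i => (F.filter fun g => s g i ∉ F).image (s · i) := by
    simp only [Finset.subset_iff, Finset.mem_biUnion, Finset.mem_image, Finset.mem_range]
    rintro _ ⟨g, hg, i, hi, rfl⟩
    by_cases hin : s g i ∈ F
    · exact Finset.mem_union_left _ hin
    · have hi0 : i ≠ 0 := by rintro rfl; exact hin (by rwa [hs g hg])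
      refine Finset.mem_union_right _ (Finset.mem_biUnion.2 ⟨i, ?_, ?_⟩)
      · simp only [Finset.mem_Icc]; omega
      · exact Finset.mem_image_of_mem _ (Finset.mem_filter.2 ⟨hg, hin⟩)
  calc _ ≤ _ := card_le_card hsub
    _ ≤ #F + #((Icc 1 n).biUnion _) := card_union_le _ _
    _ ≤ _ := Nat.add_le_add_left (card_biUnion_le.trans (sum_le_sum fun _ _ => card_image_le)) _

theorem natCast_lt_one_add_mul_of_le_add {a b : ℕ} {c : ℝ≥0∞} {ε : ℝ} (hb : 0 < b)
    (ha : (a : ℝ≥0∞) ≤ b + c) (hc : c / b < ENNReal.ofReal ε) : (a : ℝ) < (1 + ε) * b := by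
  have hε : 0 < ε := ENNReal.ofReal_pos.1 (bot_le.trans_lt hc)
  rw [ENNReal.div_lt_iff (by simp [hb.ne']) (by simp)] at hc
  rw [← ENNReal.ofReal_lt_ofReal_iff (by positivity), ENNReal.ofReal_natCast,
    ENNReal.ofReal_mul (by positivity), ENNReal.ofReal_add zero_le_one hε.le, ENNReal.ofReal_one,
    ENNReal.ofReal_natCast, add_mul, one_mul]
  exact ha.trans_lt (ENNReal.add_lt_add_left (by simp) hc)

theorem card_filter_mul_notMem_le_card_symmDiff {G : Type*} [Group G] [DecidableEq G]
    (F : Finset G) (u : G) : #(F.filter fun g => u * g ∉ F) ≤ #(F ∆ F.image (u * ·)) :=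
  card_le_card_of_injOn (u * ·)
    (fun g hg => by
      rw [Finset.mem_coe, Finset.mem_filter] at hg
      exact Finset.mem_symmDiff.2 (.inr ⟨Finset.mem_image_of_mem _ hg.1, hg.2⟩))
    fun _ _ _ _ => mul_left_cancel

theorem IsFolnerSeq.tendsto_card_filter_mul_notMem_div {G : Type*} [Group G] {F : ℕ → Finset G}
    (hF : IsFolnerSeq F) (u : G) :
    Tendsto (fun m => (#((F m).filter fun g => u * g ∉ F m) : ℝ≥0∞) / #(F m)) atTop (nhds 0) := by
  have h := ENNReal.tendsto_ofReal (hF.2 u)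
  rw [ENNReal.ofReal_zero] at h
  refine tendsto_of_tendsto_of_tendsto_of_le_of_le tendsto_const_nhds h (fun _ => bot_le)
    fun m => ?_
  rw [ENNReal.ofReal_div_of_pos (by exact_mod_cast (hF.1 m).card_pos), ENNReal.ofReal_natCast,
    ENNReal.ofReal_natCast]
  exact ENNReal.div_le_div_right (by exact_mod_cast card_filter_mul_notMem_le_card_symmDiff _ u) _

section Action

variable {G : Type*} [Group G] {x : G × G → Bool}

theorem actB_mem_zOrders_iff (g : G) : actB g x ∈ ZOrders G ↔ x ∈ ZOrders G := by
  refine ⟨fun h => ?_, fun h => IsZOrder.preimage h (Equiv.mulRight g)⟩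
  show IsZOrder (relOf x)
  convert IsZOrder.preimage h (Equiv.mulRight g⁻¹) using 1
  ext a b
  simp [Order.Preimage, relOf, actB]

theorem biOf_actB_mul (hx : x ∈ ZOrders G) (g : G) (i : ℤ) :
    biOf (relOf (actB g x)) i * g = biOf (relOf x) (idxOf (relOf x) g + i) := by
  obtain ⟨hbij, -, hlt⟩ := IsZOrder.isAnchoredIso_biOf hx
  set k := idxOf (relOf x) g
  have hshift : IsAnchoredIso (relOf (actB g x)) fun i => biOf (relOf x) (k + i) * g⁻¹ := by
    refine ⟨(Equiv.mulRight g⁻¹).bijective.comp (hbij.comp (Equiv.addLeft k).bijective), ?_,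
      fun i j => ?_⟩
    · simp [k, IsZOrder.biOf_idxOf hx]
    · simp only [relOf, actB, inv_mul_cancel_right]
      exact (add_lt_add_iff_left k).symm.trans (hlt _ _)
  simp [biOf_eq_of_isAnchoredIso hshift]

theorem measurable_actB [Countable G] (g : G) : Measurable (actB g) := by
  unfold actB
  fun_prop

end Action

section Measurability

variable {G : Type*}

@[fun_prop]
theorem measurable_relOf (a b : G) : Measurable fun x : G × G → Bool => relOf x a b := by
  unfold relOf
  fun_prop

variable [Countable G]

@[fun_prop]
theorem measurable_relCovBy (u v : G) :
    Measurable fun x : G × G → Bool => RelCovBy (relOf x) u v := by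
  unfold RelCovBy
  fun_prop

theorem measurableSet_zOrders : MeasurableSet (ZOrders G) := by
  simp only [ZOrders, isZOrder_iff, measurableSet_setOfPred]
  fun_prop

/-- `bi(i ± 1)` is the immediate successor (predecessor) of `bi(i)`, a condition on countably many
coordinates, so the events `bi(i) = v` are measurable by induction on `i`. -/
theorem measurable_mem_zOrders_and_biOf_eq [One G] (i : ℤ) (v : G) :
    Measurable fun x => x ∈ ZOrders G ∧ biOf (relOf x) i = v := by
  induction i using Int.induction_on generalizing v with
  | zero =>
    have : (fun x => x ∈ ZOrders G ∧ biOf (relOf x) 0 = v) = fun x => x ∈ ZOrders G ∧ 1 = v := by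
      ext x
      exact and_congr_right fun hx => by rw [(IsZOrder.isAnchoredIso_biOf hx).2.1]
    rw [this]
    exact measurableSet_zOrders.mem.and measurable_const
  | succ i ih =>
    have : (fun x => x ∈ ZOrders G ∧ biOf (relOf x) (i + 1) = v) = fun x =>
        ∃ u, (x ∈ ZOrders G ∧ biOf (relOf x) i = u) ∧ RelCovBy (relOf x) u v := by
      ext x
      refine ⟨fun ⟨hx, h⟩ => ⟨_, ⟨hx, rfl⟩, (IsZOrder.biOf_add_one_eq_iff hx i v).1 h⟩, ?_⟩
      rintro ⟨u, ⟨hx, rfl⟩, h⟩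
      exact ⟨hx, (IsZOrder.biOf_add_one_eq_iff hx i v).2 h⟩
    rw [this]
    exact .exists fun u => (ih u).and (measurable_relCovBy u v)
  | pred i ih =>
    have : (fun x => x ∈ ZOrders G ∧ biOf (relOf x) (-i - 1) = v) = fun x =>
        ∃ u, (x ∈ ZOrders G ∧ biOf (relOf x) (-i) = u) ∧ RelCovBy (relOf x) v u := by
      ext x
      refine ⟨fun ⟨hx, h⟩ => ⟨_, ⟨hx, rfl⟩, (IsZOrder.biOf_sub_one_eq_iff hx _ v).1 h⟩, ?_⟩
      rintro ⟨u, ⟨hx, rfl⟩, h⟩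
      exact ⟨hx, (IsZOrder.biOf_sub_one_eq_iff hx _ v).2 h⟩
    rw [this]
    exact .exists fun u => (ih u).and (measurable_relCovBy v u)

theorem measurable_mem_zOrders_and_biOf [One G] (i : ℤ) (p : G → Prop) :
    Measurable fun x => x ∈ ZOrders G ∧ p (biOf (relOf x) i) := by
  have : (fun x => x ∈ ZOrders G ∧ p (biOf (relOf x) i)) = fun x =>
      ∃ v, (x ∈ ZOrders G ∧ biOf (relOf x) i = v) ∧ p v := by
    ext x
    exact ⟨fun ⟨hx, h⟩ => ⟨_, ⟨hx, rfl⟩, h⟩, fun ⟨_, ⟨hx, hv⟩, h⟩ => ⟨hx, hv ▸ h⟩⟩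
  rw [this]
  exact .exists fun v => (measurable_mem_zOrders_and_biOf_eq i v).and measurable_const

end Measurability

section Escape

variable {G : Type*} [Group G] {x : G × G → Bool}

def escapeSet (F : Finset G) (i : ℤ) (g : G) : Set (G × G → Bool) :=
  {x | x ∈ ZOrders G ∧ biOf (relOf x) (idxOf (relOf x) g + i) ∉ F}

def translatedEscapeSet (F : Finset G) (i : ℤ) (g : G) : Set (G × G → Bool) :=
  {y | y ∈ ZOrders G ∧ biOf (relOf y) i * g ∉ F}

theorem escapeSet_eq_preimage (F : Finset G) (i : ℤ) (g : G) :
    escapeSet F i g = actB g ⁻¹' translatedEscapeSet F i g := by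
  ext x
  simp only [escapeSet, translatedEscapeSet, Set.mem_ofPred_eq, Set.mem_preimage,
    actB_mem_zOrders_iff]
  exact and_congr_right fun hx => by rw [biOf_actB_mul hx]

theorem sum_indicator_translatedEscapeSet (F : Finset G) (i : ℤ) (y : G × G → Bool) :
    ∑ g ∈ F, (translatedEscapeSet F i g).indicator (1 : (G × G → Bool) → ℝ≥0∞) y =
      (ZOrders G).indicator (fun y => (#(F.filter fun g => biOf (relOf y) i * g ∉ F) : ℝ≥0∞))
        y := by
  by_cases hy : y ∈ ZOrders G
  · simp only [translatedEscapeSet, Set.indicator_apply, Set.mem_ofPred_eq, hy, true_and,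
      Pi.one_apply, if_true]
    rw [Finset.sum_boole]
  · simp [translatedEscapeSet, hy]

noncomputable def escapeCount (F : Finset G) (i : ℤ) (x : G × G → Bool) : ℝ≥0∞ :=
  ∑ g ∈ F, (escapeSet F i g).indicator 1 x

theorem escapeCount_eq_card (hx : x ∈ ZOrders G) (F : Finset G) (i : ℤ) :
    escapeCount F i x = #(F.filter fun g => biOf (relOf x) (idxOf (relOf x) g + i) ∉ F) := by
  simp only [escapeCount, Set.indicator_apply, escapeSet, Set.mem_ofPred_eq, hx, true_and,
    Pi.one_apply]
  rw [Finset.sum_boole]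

theorem card_biUnion_fwdInt_le (hx : x ∈ ZOrders G) (F : Finset G) (n : ℕ) :
    (#(F.biUnion fun g => fwdInt (relOf x) g n) : ℝ≥0∞) ≤
      #F + ∑ i ∈ Icc 1 n, escapeCount F i x := by
  have := card_biUnion_image_range_le F (fun g (i : ℕ) => biOf (relOf x) (idxOf (relOf x) g + i))
    (fun g _ => by simp [IsZOrder.biOf_idxOf hx]) n
  simp only [escapeCount_eq_card hx, fwdInt_eq_image]
  exact_mod_cast this

theorem card_biUnion_bwdInt_le (hx : x ∈ ZOrders G) (F : Finset G) (n : ℕ) :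
    (#(F.biUnion fun g => bwdInt (relOf x) g n) : ℝ≥0∞) ≤
      #F + ∑ i ∈ Icc 1 n, escapeCount F (-i) x := by
  have := card_biUnion_image_range_le F (fun g (i : ℕ) => biOf (relOf x) (idxOf (relOf x) g - i))
    (fun g _ => by simp [IsZOrder.biOf_idxOf hx]) n
  simp only [escapeCount_eq_card hx, bwdInt_eq_image, ← sub_eq_add_neg]
  exact_mod_cast this

noncomputable def escapeDensity (F : Finset G) (n : ℕ) (x : G × G → Bool) : ℝ≥0∞ :=
  ∑ i ∈ Icc 1 n, (escapeCount F i x / #F + escapeCount F (-i) x / #F)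

theorem card_biUnion_lt_of_escapeDensity_lt (hx : x ∈ ZOrders G) {F : Finset G}
    (hF : F.Nonempty) {n : ℕ} {ε : ℝ} (h : escapeDensity F n x < ENNReal.ofReal ε) :
    (#(F.biUnion fun g => fwdInt (relOf x) g n) : ℝ) < (1 + ε) * #F ∧
      (#(F.biUnion fun g => bwdInt (relOf x) g n) : ℝ) < (1 + ε) * #F := by
  have hsum_div (j : ℕ → ℤ) : (∑ i ∈ Icc 1 n, escapeCount F (j i) x) / #F =
      ∑ i ∈ Icc 1 n, escapeCount F (j i) x / #F := by
    simp only [div_eq_mul_inv, Finset.sum_mul]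
  refine ⟨natCast_lt_one_add_mul_of_le_add hF.card_pos (card_biUnion_fwdInt_le hx F n)
    (lt_of_le_of_lt ?_ h), natCast_lt_one_add_mul_of_le_add hF.card_pos
    (card_biUnion_bwdInt_le hx F n) (lt_of_le_of_lt ?_ h)⟩
  · rw [hsum_div (fun i => i)]
    exact Finset.sum_le_sum fun i _ => le_self_add
  · rw [hsum_div (fun i => -i)]
    exact Finset.sum_le_sum fun i _ => le_add_self

variable [Countable G] {ν : Measure (G × G → Bool)}

theorem measurableSet_translatedEscapeSet (F : Finset G) (i : ℤ) (g : G) :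
    MeasurableSet (translatedEscapeSet F i g) :=
  (measurable_mem_zOrders_and_biOf i (· * g ∉ F)).setOf

theorem measurableSet_escapeSet (F : Finset G) (i : ℤ) (g : G) :
    MeasurableSet (escapeSet F i g) := by
  rw [escapeSet_eq_preimage]
  exact measurable_actB g (measurableSet_translatedEscapeSet F i g)

@[fun_prop]
theorem measurable_escapeCount (F : Finset G) (i : ℤ) : Measurable (escapeCount F i) :=
  Finset.measurable_sum _ fun g _ => measurable_one.indicator (measurableSet_escapeSet F i g)

@[fun_prop]
theorem measurable_escapeDensity (F : Finset G) (n : ℕ) : Measurable (escapeDensity F n) := by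
  unfold escapeDensity
  fun_prop

theorem lintegral_escapeCount (hinv : ∀ g : G, Measure.map (actB g) ν = ν) (F : Finset G)
    (i : ℤ) : ∫⁻ x, escapeCount F i x ∂ν =
      ∫⁻ y, ∑ g ∈ F, (translatedEscapeSet F i g).indicator 1 y ∂ν := by
  have hS := measurableSet_translatedEscapeSet F i
  unfold escapeCount
  rw [lintegral_finsetSum _ fun g _ => measurable_one.indicator (measurableSet_escapeSet F i g),
    lintegral_finsetSum _ fun g _ => measurable_one.indicator (hS g)]
  refine Finset.sum_congr rfl fun g _ => ?_
  rw [lintegral_indicator_one (measurableSet_escapeSet F i g), lintegral_indicator_one (hS g),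
    escapeSet_eq_preimage, ← Measure.map_apply (measurable_actB g) (hS g), hinv]

theorem tendsto_lintegral_escapeCount_div (hsupp : ν (ZOrders G) = 1)
    (hinv : ∀ g : G, Measure.map (actB g) ν = ν) {F : ℕ → Finset G} (hF : IsFolnerSeq F)
    (i : ℤ) : Tendsto (fun m => ∫⁻ x, escapeCount (F m) i x / #(F m) ∂ν) atTop (nhds 0) := by
  have hcard (m : ℕ) : (#(F m) : ℝ≥0∞)⁻¹ ≠ ⊤ := by simpa using (hF.1 m).ne_empty
  have hlint (m : ℕ) : ∫⁻ x, escapeCount (F m) i x / #(F m) ∂ν =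
      ∫⁻ y, (∑ g ∈ F m, (translatedEscapeSet (F m) i g).indicator 1 y) / #(F m) ∂ν := by
    simp only [div_eq_mul_inv]
    rw [lintegral_mul_const' _ _ (hcard m), lintegral_mul_const' _ _ (hcard m),
      lintegral_escapeCount hinv]
  simp only [hlint]
  rw [← lintegral_zero]
  refine tendsto_lintegral_of_dominated_convergence ((ZOrders G).indicator 1)
    (fun m => (Finset.measurable_sum _ fun g _ =>
      measurable_one.indicator (measurableSet_translatedEscapeSet _ i g)).div_const _)
    (fun m => .of_forall fun y => ?_) ?_ (.of_forall fun y => ?_)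
  · simp only [sum_indicator_translatedEscapeSet]
    by_cases hy : y ∈ ZOrders G
    · simpa [hy] using ENNReal.div_le_of_le_mul (by simpa using card_filter_le _ _)
    · simp [hy]
  · rw [lintegral_indicator_one measurableSet_zOrders, hsupp]
    exact ENNReal.one_ne_top
  · simp only [sum_indicator_translatedEscapeSet]
    by_cases hy : y ∈ ZOrders G
    · simpa [hy] using hF.tendsto_card_filter_mul_notMem_div _
    · simp [hy]

theorem tendsto_lintegral_escapeDensity (hsupp : ν (ZOrders G) = 1)
    (hinv : ∀ g : G, Measure.map (actB g) ν = ν) {F : ℕ → Finset G} (hF : IsFolnerSeq F)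
    (n : ℕ) : Tendsto (fun m => ∫⁻ x, escapeDensity (F m) n x ∂ν) atTop (nhds 0) := by
  have hint (m : ℕ) : ∫⁻ x, escapeDensity (F m) n x ∂ν = ∑ i ∈ Icc 1 n,
      (∫⁻ x, escapeCount (F m) i x / #(F m) ∂ν + ∫⁻ x, escapeCount (F m) (-i) x / #(F m) ∂ν) := by
    unfold escapeDensity
    rw [lintegral_finsetSum _ fun i _ => by fun_prop]
    exact Finset.sum_congr rfl fun i _ => lintegral_add_left (by fun_prop) _
  simpa [hint] using tendsto_finsetSum (Icc 1 n) fun i _ =>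
    (tendsto_lintegral_escapeCount_div hsupp hinv hF i).add
      (tendsto_lintegral_escapeCount_div hsupp hinv hF (-i))

end Escape

theorem tendsto_measure_setOf_le_of_tendsto_lintegral {α ι : Type*} [MeasurableSpace α]
    {μ : Measure α} {l : Filter ι} {f : ι → α → ℝ≥0∞} (hf : ∀ m, AEMeasurable (f m) μ)
    (h : Tendsto (fun m => ∫⁻ x, f m x ∂μ) l (nhds 0)) {δ : ℝ≥0∞} (hδ : δ ≠ 0) (hδ' : δ ≠ ⊤) :
    Tendsto (fun m => μ {x | δ ≤ f m x}) l (nhds 0) := by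
  have hdiv := ENNReal.Tendsto.div_const h (.inr hδ)
  rw [ENNReal.zero_div] at hdiv
  exact tendsto_of_tendsto_of_tendsto_of_le_of_le tendsto_const_nhds hdiv (fun _ => bot_le)
    fun m => meas_ge_le_lintegral_div (hf m) hδ hδ'

theorem folner_interval_enlargement_general {G : Type*} [Group G] [Countable G]
    (ν : Measure (G × G → Bool))
    (hsupp : ν (ZOrders G) = 1)
    (hinv : ∀ g : G, Measure.map (actB g) ν = ν)
    (F : ℕ → Finset G) (hF : IsFolnerSeq F) (n : ℕ) (ε : ℝ) (hε : 0 < ε) :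
    ∀ᶠ m in atTop, ∃ O' : Set (G × G → Bool), MeasurableSet O' ∧ O' ⊆ ZOrders G ∧
      ENNReal.ofReal (1 - ε) < ν O' ∧
      ∀ x ∈ O',
        ((((F m).biUnion (fun g => fwdInt (relOf x) g n)).card : ℝ)
            < (1 + ε) * (F m).card) ∧
        ((((F m).biUnion (fun g => bwdInt (relOf x) g n)).card : ℝ)
            < (1 + ε) * (F m).card) := by
  set bad : ℕ → Set (G × G → Bool) := fun m => {x | ENNReal.ofReal ε ≤ escapeDensity (F m) n x}
  have hbad : Tendsto (fun m => ν (bad m)) atTop (nhds 0) :=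
    tendsto_measure_setOf_le_of_tendsto_lintegral (fun m => by fun_prop)
      (tendsto_lintegral_escapeDensity hsupp hinv hF n) (by simpa using hε) ENNReal.ofReal_ne_top
  have hδ : 0 < 1 - ENNReal.ofReal (1 - ε) :=
    tsub_pos_of_lt (ENNReal.ofReal_lt_one.2 (by linarith))
  filter_upwards [hbad.eventually (gt_mem_nhds hδ)] with m hm
  refine ⟨ZOrders G \ bad m, measurableSet_zOrders.diff (measurableSet_le (by fun_prop)
    (by fun_prop)), Set.sdiff_subset, ?_,
    fun x ⟨hx, hgood⟩ => card_biUnion_lt_of_escapeDensity_lt hx (hF.1 m) (not_le.1 hgood)⟩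
  calc ENNReal.ofReal (1 - ε) < ν (ZOrders G) - ν (bad m) := by rwa [hsupp, lt_tsub_comm]
    _ ≤ ν (ZOrders G \ bad m) := le_measure_sdiff

/-- Lemma 4.1: for a multiorder `ν`, a Følner sequence `(F m)`, `n ∈ ℕ` and `ε > 0`, for
all sufficiently large `m` there is a Borel set `Õ'_m ⊆ Õ` with `ν(Õ'_m) > 1 − ε` on
which `|[F m, F m + n]^≺| < (1+ε)·|F m|` and `|[F m − n, F m]^≺| < (1+ε)·|F m|`. -/
theorem folner_interval_enlargement {G : Type*} [Group G] [Countable G] [Infinite G]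
    (ν : Measure (G × G → Bool)) [IsProbabilityMeasure ν]
    (hsupp : ν (ZOrders G) = 1)
    (hinv : ∀ g : G, Measure.map (actB g) ν = ν)
    (F : ℕ → Finset G) (hF : IsFolnerSeq F) (n : ℕ) (ε : ℝ) (hε : 0 < ε) :
    ∀ᶠ m in atTop, ∃ O' : Set (G × G → Bool), MeasurableSet O' ∧ O' ⊆ ZOrders G ∧
      ENNReal.ofReal (1 - ε) < ν O' ∧
      ∀ x ∈ O',
        ((((F m).biUnion (fun g => fwdInt (relOf x) g n)).card : ℝ)
            < (1 + ε) * (F m).card) ∧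
        ((((F m).biUnion (fun g => bwdInt (relOf x) g n)).card : ℝ)
            < (1 + ε) * (F m).card) :=
  folner_interval_enlargement_general ν hsupp hinv F hF n ε hε
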